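/- Let n ≥ 3 and work in the 2n×2n complex matrices. Set x = E 1 2 + E (n+1) (n+2), y = E 1 1 - E 2 2 + E (n+1) (n+1) - E (n+2) (n+2), and z = E 2 (n+1) + E (n+2) 1. If λ ∈ ℂ satisfies ⁅x, ⁅y, z⁆⁆ + ⁅y, ⁅z, x⁆⁆ + λ • ⁅z, ⁅x, y⁆⁆ = 0, then λ = 1. (This is the graded Hom-Jacobi identity for the automorphism ȷ(λ) of the queer Lie superalgebra Q(n-1) evaluated at the even elements x, y and the odd element z; in particular λ = -1 is impossible, which rules out the automorphism σ_q² = ȷ(-1).) -/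

import Mathlib

/-! `x` and `z` are eigenvectors of `ad y` with eigenvalues `2` and `-2`. Whenever `⁅y, x⁆ = a • x`
and `⁅y, z⁆ = b • z`, the Leibniz rule gives `⁅y, ⁅z, x⁆⁆ = (a + b) • ⁅z, x⁆`, and the Hom-Jacobi
expression collapses to `(a * (1 - λ)) • ⁅z, x⁆`. As `a = 2` and `⁅z, x⁆` has entry `1` at
`(2, n + 2)`, this forces `λ = 1`. -/

open Matrix

section HomJacobi

variable {R L : Type*} [CommRing R] [LieRing L] [LieAlgebra R L]

/-- `⁅ȷ x, ⁅y, z⁆⁆ + ⁅ȷ y, ⁅z, x⁆⁆ + ⁅ȷ z, ⁅x, y⁆⁆` for a map `ȷ` fixing `x`, `y` and scaling `z`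
by `l`. -/
def homJacobiator (l : R) (x y z : L) : L :=
  ⁅x, ⁅y, z⁆⁆ + ⁅y, ⁅z, x⁆⁆ + l • ⁅z, ⁅x, y⁆⁆

theorem homJacobiator_of_lie_eq_smul {x y z : L} {a b : R}
    (hx : ⁅y, x⁆ = a • x) (hz : ⁅y, z⁆ = b • z) (l : R) :
    homJacobiator l x y z = (a * (1 - l)) • ⁅z, x⁆ := by
  have hzx : ⁅y, ⁅z, x⁆⁆ = (a + b) • ⁅z, x⁆ := by
    rw [leibniz_lie, hx, hz, lie_smul, smul_lie, add_smul, add_comm]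
  have hxy : ⁅x, y⁆ = -(a • x) := by rw [← lie_skew, hx]
  rw [homJacobiator, hzx, hz, hxy, lie_smul, lie_neg, lie_smul, ← lie_skew z x]
  module

theorem eq_one_of_homJacobiator_eq_zero [IsDomain R] [Module.IsTorsionFree R L] {x y z : L}
    {a b l : R} (hx : ⁅y, x⁆ = a • x) (hz : ⁅y, z⁆ = b • z) (ha : a ≠ 0) (hzx : ⁅z, x⁆ ≠ 0)
    (h : homJacobiator l x y z = 0) : l = 1 := by
  rw [homJacobiator_of_lie_eq_smul hx hz, smul_eq_zero, mul_eq_zero, sub_eq_zero] at h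
  exact ((h.resolve_right hzx).resolve_left ha).symm

end HomJacobi

namespace Matrix

attribute [local instance] LieRing.ofAssociativeRing

variable {ι R : Type*} [Fintype ι] [DecidableEq ι] [CommRing R]

theorem lie_diagonal_single (v : ι → R) (i j : ι) (r : R) :
    ⁅diagonal v, single i j r⁆ = (v i - v j) • single i j r := by
  ext k m
  simp only [Ring.lie_def, sub_apply, diagonal_mul, mul_diagonal, smul_apply, single_apply,
    smul_eq_mul]
  split_ifs with h
  · rw [h.1, h.2]; ring
  · simp

theorem lie_diagonal_single_add_single (v : ι → R) {i j k m : ι} (h : v k - v m = v i - v j)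
    (r : R) :
    ⁅diagonal v, single i j r + single k m r⁆ = (v i - v j) • (single i j r + single k m r) := by
  rw [lie_add, lie_diagonal_single, lie_diagonal_single, h, smul_add]

theorem eq_one_of_homJacobiator_single_eq_zero [IsDomain R] {a b c d : ι} (hab : a ≠ b)
    (hac : a ≠ c) (had : a ≠ d) (hbc : b ≠ c) (hbd : b ≠ d) (hcd : c ≠ d) (h2 : (2 : R) ≠ 0)
    {l : R}
    (h : homJacobiator l (single a b 1 + single c d 1)
      (single a a 1 - single b b 1 + single c c 1 - single d d (1 : R))
      (single b c 1 + single d a 1) = 0) : l = 1 := by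
  set v : ι → R := Pi.single a 1 - Pi.single b 1 + Pi.single c 1 - Pi.single d 1
  have hy : single a a 1 - single b b 1 + single c c 1 - single d d (1 : R) = diagonal v := by
    simp only [v, ← diagonal_single, diagonal_add, diagonal_sub]
    rfl
  obtain ⟨hvab, hvcd, hvbc, hvda⟩ :
      v a - v b = 2 ∧ v c - v d = 2 ∧ v b - v c = -2 ∧ v d - v a = -2 := by
    simp [v, hab, hac, had, hbc, hbd, hcd, hab.symm, hac.symm, had.symm, hbc.symm, hbd.symm,
      hcd.symm]
    norm_num
  rw [hy] at h
  refine eq_one_of_homJacobiator_eq_zero (b := -2) ?_ ?_ h2 (fun h0 => ?_) h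
  · rw [lie_diagonal_single_add_single _ (hvcd.trans hvab.symm), hvab]
  · rw [lie_diagonal_single_add_single _ (hvda.trans hvbc.symm), hvbc]
  · have hentry := congrFun (congrFun h0 b) d
    simp [Ring.lie_def, add_mul, mul_add, single_mul_single_of_ne, hab, hac, had, hbd, hcd,
      hac.symm, hbc.symm, hbd.symm] at hentry

end Matrix

/-- The Hom-Jacobi identity for `ȷ(λ)` on the queer Lie superalgebra `Q(n-1)` at
the even elements `x = E 1 2 + E (n+1) (n+2)`,
`y = E 1 1 - E 2 2 + E (n+1) (n+1) - E (n+2) (n+2)` and the odd element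
`z = E 2 (n+1) + E (n+2) 1` (1-based indexing) forces `λ = 1`. -/
theorem jmap_homJacobi_queer_forces_lambda_eq_one (n : ℕ) (hn : 3 ≤ n) (l : ℂ)
    (x y z : Matrix (Fin (2 * n)) (Fin (2 * n)) ℂ)
    (hx : x = Matrix.single ⟨0, by omega⟩ ⟨1, by omega⟩ (1 : ℂ) +
              Matrix.single ⟨n, by omega⟩ ⟨n + 1, by omega⟩ (1 : ℂ))
    (hy : y = Matrix.single ⟨0, by omega⟩ ⟨0, by omega⟩ (1 : ℂ) -
              Matrix.single ⟨1, by omega⟩ ⟨1, by omega⟩ (1 : ℂ) +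
              Matrix.single ⟨n, by omega⟩ ⟨n, by omega⟩ (1 : ℂ) -
              Matrix.single ⟨n + 1, by omega⟩ ⟨n + 1, by omega⟩ (1 : ℂ))
    (hz : z = Matrix.single ⟨1, by omega⟩ ⟨n, by omega⟩ (1 : ℂ) +
              Matrix.single ⟨n + 1, by omega⟩ ⟨0, by omega⟩ (1 : ℂ))
    (h : ⁅x, ⁅y, z⁆⁆ + ⁅y, ⁅z, x⁆⁆ + l • ⁅z, ⁅x, y⁆⁆ = 0) :
    l = 1 := by
  subst hx hy hz
  exact eq_one_of_homJacobiator_single_eq_zero (mt Fin.mk.inj (by omega))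
    (mt Fin.mk.inj (by omega)) (mt Fin.mk.inj (by omega)) (mt Fin.mk.inj (by omega))
    (mt Fin.mk.inj (by omega)) (mt Fin.mk.inj (by omega)) two_ne_zero h
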